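/- With positions f(r(i,j)) = (i−1)(2n−1)+j, f(r̃(i,j)) = (i−1)(2n−1)−j+2, values r(i,j) = (j−1)(2m−1)+i, r̃(i,j) = (j−1)(2m−1)−i+2, and coordinates i_q = i, j_q = j if q = r(i,j) and i_q = i−0.5, j_q = j−0.5 if q = r̃(i,j): for any two distinct tokens q, q', both f(q) < f(q') and q < q' hold if and only if ⌈i_q⌉ ≤ i_{q'} and ⌈j_q⌉ ≤ j_{q'}. -/
import Mathlib


/-- Formal tokens: `r i j` (weight `c - d i j`) and `rt i j` (the token `r̃(i,j)`, weight `c`). -/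
inductive Tok where
  | r  (i j : ℕ) : Tok
  | rt (i j : ℕ) : Tok
deriving DecidableEq

/-- The domain of tokens: `r(i,j)` for `1 ≤ i ≤ m`, `1 ≤ j ≤ n`,
and `r̃(i,j)` for `2 ≤ i ≤ m`, `2 ≤ j ≤ n`. -/
def TokDom (m n : ℕ) : Tok → Prop
  | .r i j  => 1 ≤ i ∧ i ≤ m ∧ 1 ≤ j ∧ j ≤ n
  | .rt i j => 2 ≤ i ∧ i ≤ m ∧ 2 ≤ j ∧ j ≤ n

/-- The position `f(q)` of a token in the sequence `R_{A,B}`. -/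
def tpos (n : ℕ) : Tok → ℕ
  | .r i j  => (i - 1) * (2 * n - 1) + j
  | .rt i j => (i - 1) * (2 * n - 1) - j + 2

/-- The integer value of a token in the sequence `R_{A,B}`. -/
def tval (m : ℕ) : Tok → ℕ
  | .r i j  => (j - 1) * (2 * m - 1) + i
  | .rt i j => (j - 1) * (2 * m - 1) - i + 2

/-- The (half-integer) row coordinate `i_q` of a token. -/
def iq : Tok → ℚ
  | .r i _  => i
  | .rt i _ => (i : ℚ) - 1/2

/-- The (half-integer) column coordinate `j_q` of a token. -/
def jq : Tok → ℚ
  | .r _ j  => j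
  | .rt _ j => (j : ℚ) - 1/2

/-- The weight of a token: `c - d i j` for `r(i,j)` and `c` for `r̃(i,j)`. -/
def tw (c : ℕ) (d : ℕ → ℕ → ℕ) : Tok → ℕ
  | .r i j => c - d i j
  | .rt _ _ => c

/-- `Q` is an increasing subsequence of the segment of `R_{A,B}` occupying
positions `pl` through `pr`: its tokens are in the domain, their positions lie in
`[pl, pr]` and strictly increase, and their values strictly increase. -/
def IncSeg (m n pl pr : ℕ) (Q : List Tok) : Prop :=
  (∀ t ∈ Q, TokDom m n t ∧ pl ≤ tpos n t ∧ tpos n t ≤ pr) ∧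
    Q.Chain' fun t t' => tpos n t < tpos n t' ∧ tval m t < tval m t'

/-- `Q` is `[a:b]`-banded: every value lies in `[a, b]`. -/
def Banded (m a b : ℕ) (Q : List Tok) : Prop :=
  ∀ t ∈ Q, a ≤ tval m t ∧ tval m t ≤ b

/-- `Q` is a maximal increasing subsequence of the segment `[pl, pr]` of `R_{A,B}`:
it is the only increasing subsequence of the segment having it as a subsequence. -/
def MaxIncSeg (m n pl pr : ℕ) (Q : List Tok) : Prop :=
  IncSeg m n pl pr Q ∧ ∀ Q', IncSeg m n pl pr Q' → Q.Sublist Q' → Q' = Q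

/-- `Q` is a maximal `[a:b]`-banded increasing subsequence of the segment `[pl, pr]`. -/
def MaxBandIncSeg (m n pl pr a b : ℕ) (Q : List Tok) : Prop :=
  IncSeg m n pl pr Q ∧ Banded m a b Q ∧
    ∀ Q', IncSeg m n pl pr Q' → Banded m a b Q' → Q.Sublist Q' → Q' = Q



lemma lex_key (N a b u v : ℕ) (hu : 1 ≤ u) (huN : u ≤ N) (hv : 1 ≤ v) (hvN : v ≤ N) :
    a * N + u < b * N + v ↔ a < b ∨ (a = b ∧ u < v) := by
  constructor
  · intro h
    rcases lt_trichotomy a b with h' | h' | h'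
    · exact Or.inl h'
    · subst h'; exact Or.inr ⟨rfl, by omega⟩
    · exfalso
      have : (b + 1) * N ≤ a * N := Nat.mul_le_mul_right N h'
      have : b * N + N ≤ a * N := by nlinarith
      omega
  · rintro (h | ⟨rfl, h⟩)
    · have : (a + 1) * N ≤ b * N := Nat.mul_le_mul_right N h
      have : a * N + N ≤ b * N := by nlinarith
      omega
    · omega

lemma ceil_half (i : ℕ) (hi : 1 ≤ i) : ⌈(i : ℚ) - 1/2⌉ = i := by
  rw [Int.ceil_eq_iff]
  constructor
  · push_cast; linarith
  · push_cast; linarith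

lemma le_sub_half (a b : ℕ) : ((a : ℚ) ≤ (b : ℚ) - 1/2) ↔ a < b := by
  constructor
  · intro h
    have : (a : ℚ) < b := by linarith
    exact_mod_cast this
  · intro h
    have : (a : ℚ) + 1 ≤ b := by exact_mod_cast h
    linarith

lemma rt_pos (i j n : ℕ) (hi : 2 ≤ i) (hj : 2 ≤ j) (hjn : j ≤ n) :
    (i - 1) * (2 * n - 1) - j + 2 = (i - 2) * (2 * n - 1) + (2 * n + 1 - j) := by
  have h1 : i - 1 = (i - 2) + 1 := by omega
  rw [h1, add_mul, one_mul]
  omega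

theorem increasing_iff_ceil_coordinates (m n : ℕ) (hm : 1 ≤ m) (hn : 1 ≤ n)
    (q q' : Tok) (hq : TokDom m n q) (hq' : TokDom m n q') (hne : q ≠ q') :
    (tpos n q < tpos n q' ∧ tval m q < tval m q') ↔
      ((⌈iq q⌉ : ℚ) ≤ iq q' ∧ (⌈jq q⌉ : ℚ) ≤ jq q') := by
  obtain ⟨i, j⟩ | ⟨i, j⟩ := q <;> obtain ⟨i', j'⟩ | ⟨i', j'⟩ := q' <;>
    simp only [TokDom] at hq hq' <;>
    obtain ⟨h1, h2, h3, h4⟩ := hq <;> obtain ⟨h1', h2', h3', h4'⟩ := hq' <;>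
    simp only [tpos, tval, iq, jq]
  · have hne' : ¬(i = i' ∧ j = j') := by
      intro ⟨ha, hb⟩; exact hne (by rw [ha, hb])
    rw [lex_key (2*n-1) (i-1) (i'-1) j j' h3 (by omega) h3' (by omega),
        lex_key (2*m-1) (j-1) (j'-1) i i' h1 (by omega) h1' (by omega),
        Int.ceil_natCast, Int.ceil_natCast]
    push_cast
    rw [Nat.cast_le, Nat.cast_le]
    omega
  · rw [rt_pos i' j' n h1' h3' h4', rt_pos j' i' m h3' h1' h2',
        lex_key (2*n-1) (i-1) (i'-2) j (2*n+1-j') h3 (by omega) (by omega) (by omega),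
        lex_key (2*m-1) (j-1) (j'-2) i (2*m+1-i') h1 (by omega) (by omega) (by omega),
        Int.ceil_natCast, Int.ceil_natCast]
    push_cast
    rw [le_sub_half, le_sub_half]
    omega
  · rw [rt_pos i j n h1 h3 h4, rt_pos j i m h3 h1 h2,
        lex_key (2*n-1) (i-2) (i'-1) (2*n+1-j) j' (by omega) (by omega) h3' (by omega),
        lex_key (2*m-1) (j-2) (j'-1) (2*m+1-i) i' (by omega) (by omega) h1' (by omega),
        ceil_half i (by omega), ceil_half j (by omega)]
    push_cast
    rw [Nat.cast_le, Nat.cast_le]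
    omega
  · rw [rt_pos i j n h1 h3 h4, rt_pos j i m h3 h1 h2,
        rt_pos i' j' n h1' h3' h4', rt_pos j' i' m h3' h1' h2',
        lex_key (2*n-1) (i-2) (i'-2) (2*n+1-j) (2*n+1-j') (by omega) (by omega) (by omega) (by omega),
        lex_key (2*m-1) (j-2) (j'-2) (2*m+1-i) (2*m+1-i') (by omega) (by omega) (by omega) (by omega),
        ceil_half i (by omega), ceil_half j (by omega)]
    push_cast
    rw [le_sub_half, le_sub_half]
    omega
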